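/- Fix positive integers m, k, an integer N ≥ 5, and a transition function δ : Q×Γ → ℂ^{Q×Γ×{−1,+1}} of a quantum Turing machine with state set Q = {1,…,m} and tape alphabet Γ = {0,…,k−1}, and assume the looped evolution operator U_{δ,N} on ℋ_N is unitary. Define V = A U_{δ,N} A* + (1 − AA*) on 𝒦_N and W = (F_0⋯F_{N−1}) V* (F_0⋯F_{N−1}) V. Then WA = VA; that is, V and W agree on im(A). -/

import Mathlib

/-!
On `im A` the operator `V = A U A* + (1 - A A*)` acts as `A U A*`, so `V A = A U` because
`A* A = 1`. The product `F = F_0 ⋯ F_{N-1}` negates every slot, so it sends each `f(p,i,T)`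
to a basis vector whose slot at the head is `-(p+1) < 0`; these are orthogonal to `im A`, on
whose orthogonal complement `V*` is the identity. Hence, as `F² = 1`,
`F V* F V A = F V* F A U = F F A U = A U = V A`.
-/

open Matrix
open scoped Classical

/-- Tape-head directions, `true ↦ +1` and `false ↦ -1`. -/
def dirInt (D : Bool) : ℤ := if D then 1 else -1

/-- A configuration of the machine running on a tape loop of length `N`: a state in
`Q = Fin m`, a head position in `ℤ_N`, and a tape `ℤ_N → Γ = Fin k`. -/
abbrev ConfigN (m k N : ℕ) : Type := Fin m × ZMod N × (ZMod N → Fin k)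

/-- The matrix of the looped evolution operator `U_{δ,N}` on `ℋ_N`, defined by
`U_{δ,N} |p,i,T⟩ = Σ_{q,a,D} δ(p, T(i))[q,a,D] |q, i+D, T_{i,a}⟩` with `i + D` computed
modulo `N`. -/
noncomputable def QTMkernelN (m k N : ℕ) [NeZero N]
    (δ : Fin m × Fin k → Fin m × Fin k × Bool → ℂ) :
    Matrix (ConfigN m k N) (ConfigN m k N) ℂ :=
  Matrix.of fun c' c => ∑ x : Fin m × Fin k × Bool,
    if c'.1 = x.1 ∧ c'.2.1 = c.2.1 + (dirInt x.2.2 : ZMod N) ∧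
        c'.2.2 = Function.update c.2.2 c.2.1 x.2.1
    then δ (c.1, c.2.2 c.2.1) x else 0

/-- The index set `{-m, …, m}` of the standard basis of the space `𝒮 = ℂ^{2m+1}` attached
to each tape square. -/
abbrev Slot (m : ℕ) : Type := {s : ℤ // s ∈ Finset.Icc (-(m : ℤ)) (m : ℤ)}

/-- The slot value `0`, indicating the absence of the tape head. -/
def slotZero (m : ℕ) : Slot m := ⟨0, by simp only [Finset.mem_Icc]; omega⟩

/-- The negation map `s ↦ -s` on `{-m, …, m}`. -/
def slotNeg {m : ℕ} (s : Slot m) : Slot m :=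
  ⟨-s.1, by have := s.2; simp only [Finset.mem_Icc] at *; omega⟩

/-- The slot value recording the (active) state `p`; the state `p : Fin m` is identified
with the value `p + 1 ∈ {1, …, m}`. -/
def slotState {m : ℕ} (p : Fin m) : Slot m :=
  ⟨(p : ℤ) + 1, by have := p.isLt; simp only [Finset.mem_Icc]; omega⟩

/-- The index set of the standard basis of `𝒦_N = ⊗_{i ∈ ℤ_N} (𝒮_i ⊗ 𝒯_i)`. -/
abbrev KIdx (m k N : ℕ) : Type := ZMod N → Slot m × Fin k

/-- The standard basis vector `f(p,i,T)` of `𝒦_N` associated to a configuration: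
`𝒮_i` holds `p`, `𝒮_j` holds `0` for `j ≠ i`, and `𝒯_j` holds `T(j)`. -/
def fConf {m k N : ℕ} (c : ConfigN m k N) : KIdx m k N :=
  fun j => (if j = c.2.1 then slotState c.1 else slotZero m, c.2.2 j)

/-- The isometry `A = Σ_{(p,i,T)} |f(p,i,T)⟩⟨p,i,T|` from `ℋ_N` to `𝒦_N`, as a matrix. -/
noncomputable def Amat (m k N : ℕ) : Matrix (KIdx m k N) (ConfigN m k N) ℂ :=
  Matrix.of fun b c => if b = fConf c then 1 else 0

/-- The unitary `F_i` on `𝒦_N` applying `F : |s⟩ ↦ |-s⟩` to the factor `𝒮_i` and the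
identity to all other factors, as a matrix. -/
noncomputable def Fmat (m k N : ℕ) [NeZero N] (i : ZMod N) :
    Matrix (KIdx m k N) (KIdx m k N) ℂ :=
  Matrix.of fun b b' =>
    if b = Function.update b' i (slotNeg (b' i).1, (b' i).2) then 1 else 0

/-- The product `F_0 F_1 ⋯ F_{N-1}`, which applies `F : |s⟩ ↦ |-s⟩` independently to every
factor `𝒮_0, …, 𝒮_{N-1}` of `𝒦_N`. -/
noncomputable def FallMat (m k N : ℕ) : Matrix (KIdx m k N) (KIdx m k N) ℂ :=
  Matrix.of fun b b' =>
    if b = (fun j => (slotNeg (b' j).1, (b' j).2)) then 1 else 0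

/-- The unitary `V = A U_{δ,N} A* + (1 - A A*)` on `𝒦_N`. -/
noncomputable def Vmat (m k N : ℕ) [NeZero N]
    (δ : Fin m × Fin k → Fin m × Fin k × Bool → ℂ) :
    Matrix (KIdx m k N) (KIdx m k N) ℂ :=
  Amat m k N * QTMkernelN m k N δ * (Amat m k N)ᴴ +
    (1 - Amat m k N * (Amat m k N)ᴴ)

/-- The orthogonal projection `Π` of `𝒦_N` onto the span of the standard basis vectors in
which exactly one of the factors `𝒮_0, …, 𝒮_{N-1}` holds a nonzero value. -/
noncomputable def PiMat (m k N : ℕ) [NeZero N] : Matrix (KIdx m k N) (KIdx m k N) ℂ :=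
  Matrix.of fun b b' =>
    if b = b' ∧ (Finset.univ.filter fun j : ZMod N => (b j).1 ≠ slotZero m).card = 1
    then 1 else 0

/-- The partial trace of an operator on `𝒦_N` down to the tensor factors `𝒮_j ⊗ 𝒯_j` with
`j ∈ S`, tracing out all factors with `j ∉ S`. -/
noncomputable def reduceTo {m k N : ℕ} [NeZero N] (S : Finset (ZMod N))
    (M : Matrix (KIdx m k N) (KIdx m k N) ℂ) :
    Matrix ({j : ZMod N // j ∈ S} → Slot m × Fin k)
      ({j : ZMod N // j ∈ S} → Slot m × Fin k) ℂ :=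
  Matrix.of fun g g' => ∑ h : {j : ZMod N // j ∉ S} → Slot m × Fin k,
    M (fun j => if hj : j ∈ S then g ⟨j, hj⟩ else h ⟨j, hj⟩)
      (fun j => if hj : j ∈ S then g' ⟨j, hj⟩ else h ⟨j, hj⟩)

lemma mul_one_submatrix_id {l n o α : Type*} [Fintype o] [DecidableEq o] [NonAssocSemiring α]
    (M : Matrix l o α) (g : n → o) : M * (1 : Matrix o o α).submatrix id g = M.submatrix id g := by
  simpa using mul_submatrix_one (Equiv.refl o) g M

lemma conjTranspose_one_submatrix_mul {ι κ κ' α : Type*} [Fintype ι] [DecidableEq ι]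
    [NonAssocSemiring α] [StarRing α] (f : κ → ι) (g : κ' → ι) :
    ((1 : Matrix ι ι α).submatrix id f)ᴴ * (1 : Matrix ι ι α).submatrix id g =
      (1 : Matrix ι ι α).submatrix f g := by
  rw [conjTranspose_submatrix, conjTranspose_one, mul_one_submatrix_id, submatrix_submatrix,
    Function.comp_id, Function.id_comp]

section Dilation

variable {ι κ R : Type*} [Fintype ι] [Fintype κ] [DecidableEq ι] [Ring R] [StarRing R]

lemma dilation_mul_of_isometry [DecidableEq κ] {A : Matrix ι κ R} (U : Matrix κ κ R)
    (hA : Aᴴ * A = 1) :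
    (A * U * Aᴴ + (1 - A * Aᴴ)) * A = A * U := by
  simp only [Matrix.add_mul, Matrix.sub_mul, Matrix.one_mul, Matrix.mul_assoc, hA,
    Matrix.mul_one, sub_self, add_zero]

lemma conjTranspose_dilation_mul_of_orthogonal {κ' : Type*} {A : Matrix ι κ R}
    {B : Matrix ι κ' R} (U : Matrix κ κ R) (hAB : Aᴴ * B = 0) :
    (A * U * Aᴴ + (1 - A * Aᴴ))ᴴ * B = B := by
  simp only [conjTranspose_add, conjTranspose_sub, conjTranspose_one, conjTranspose_mul,
    conjTranspose_conjTranspose, Matrix.add_mul, Matrix.sub_mul, Matrix.one_mul,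
    Matrix.mul_assoc, hAB, Matrix.mul_zero, zero_add, sub_zero]

theorem involution_conj_dilation_mul_isometry [DecidableEq κ] {A : Matrix ι κ R}
    {U : Matrix κ κ R} {F V : Matrix ι ι R} (hV : V = A * U * Aᴴ + (1 - A * Aᴴ))
    (hA : Aᴴ * A = 1) (hFA : Aᴴ * (F * A) = 0) (hF : F * F = 1) :
    F * Vᴴ * F * V * A = V * A := by
  have hVA : V * A = A * U := hV ▸ dilation_mul_of_isometry U hA
  have hVFA : Vᴴ * (F * A) = F * A := hV ▸ conjTranspose_dilation_mul_of_orthogonal U hFA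
  calc F * Vᴴ * F * V * A = F * (Vᴴ * (F * A)) * U := by
        rw [Matrix.mul_assoc _ V, hVA]; simp only [Matrix.mul_assoc]
    _ = A * U := by rw [hVFA, ← Matrix.mul_assoc F, hF, Matrix.one_mul]
    _ = V * A := hVA.symm

end Dilation

section LoopEncoding

variable {m k N : ℕ}

def negSlots (b : KIdx m k N) : KIdx m k N := fun j => (slotNeg (b j).1, (b j).2)

lemma negSlots_involutive : Function.Involutive (negSlots (m := m) (k := k) (N := N)) := by
  intro b; funext j; simp [negSlots, slotNeg]

lemma fConf_injective : Function.Injective (fConf (m := m) (k := k) (N := N)) := by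
  rintro ⟨p, i, T⟩ ⟨p', i', T'⟩ h
  have hslot := congrArg (fun b => ((b i).1 : ℤ)) h
  have hT : T = T' := funext fun j => congrArg (fun b => (b j).2) h
  have hi : i = i' := by
    by_contra hne
    simp only [fConf, ↓reduceIte, slotState, hne, slotZero] at hslot
    omega
  subst hi hT
  simp only [fConf, if_true, slotState] at hslot
  rw [Fin.ext (by omega : (p : ℕ) = p')]

/-- At the head of `c'` the slot of `negSlots (fConf c')` is negative, whereas all slots of
`fConf c` are nonnegative. -/
lemma fConf_ne_negSlots_fConf (c c' : ConfigN m k N) : fConf c ≠ negSlots (fConf c') := by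
  intro h
  have h1 := congrArg (fun b => ((b c'.2.1).1 : ℤ)) h
  simp only [fConf, slotState, slotZero, negSlots, slotNeg, ↓reduceIte] at h1
  split_ifs at h1 <;> simp only at h1 <;> omega

lemma Amat_eq_submatrix_one [DecidableEq (KIdx m k N)] :
    Amat m k N = (1 : Matrix _ _ ℂ).submatrix id fConf := by
  ext b c
  rw [Amat, of_apply, submatrix_apply, one_apply]
  congr

lemma FallMat_eq_submatrix_one [DecidableEq (KIdx m k N)] :
    FallMat m k N = (1 : Matrix _ _ ℂ).submatrix id negSlots := by
  ext b b'
  rw [FallMat, of_apply, submatrix_apply, one_apply]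
  congr

variable [NeZero N]

lemma Amat_conjTranspose_mul_self : (Amat m k N)ᴴ * Amat m k N = 1 := by
  rw [Amat_eq_submatrix_one, conjTranspose_one_submatrix_mul]
  exact submatrix_one _ fConf_injective

lemma Amat_conjTranspose_mul_FallMat_mul_Amat :
    (Amat m k N)ᴴ * (FallMat m k N * Amat m k N) = 0 := by
  rw [FallMat_eq_submatrix_one, Amat_eq_submatrix_one, mul_one_submatrix_id, submatrix_submatrix,
    Function.comp_id, conjTranspose_one_submatrix_mul]
  ext c c'
  exact if_neg (fConf_ne_negSlots_fConf c c')

lemma FallMat_mul_self : FallMat m k N * FallMat m k N = 1 := by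
  rw [FallMat_eq_submatrix_one, mul_one_submatrix_id, submatrix_submatrix,
    negSlots_involutive.comp_self, Function.comp_id, submatrix_id_id]

end LoopEncoding

theorem statement13_general {m k : ℕ} {N : ℕ} [NeZero N]
    (δ : Fin m × Fin k → Fin m × Fin k × Bool → ℂ) :
    (FallMat m k N * (Vmat m k N δ)ᴴ * FallMat m k N * Vmat m k N δ) * Amat m k N =
      Vmat m k N δ * Amat m k N :=
  involution_conj_dilation_mul_isometry rfl Amat_conjTranspose_mul_self
    Amat_conjTranspose_mul_FallMat_mul_Amat FallMat_mul_self

/-- With `V = A U_{δ,N} A* + (1 - A A*)` and `W = (F_0 ⋯ F_{N-1}) V* (F_0 ⋯ F_{N-1}) V`,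
the operators `W` and `V` agree on the image of the isometry `A`, i.e. `W A = V A`. -/
theorem statement13 {m k : ℕ} [NeZero m] [NeZero k] {N : ℕ} [NeZero N] (hN : 5 ≤ N)
    (δ : Fin m × Fin k → Fin m × Fin k × Bool → ℂ)
    (hδ : QTMkernelN m k N δ ∈ Matrix.unitaryGroup (ConfigN m k N) ℂ) :
    (FallMat m k N * (Vmat m k N δ)ᴴ * FallMat m k N * Vmat m k N δ) * Amat m k N =
      Vmat m k N δ * Amat m k N :=
  statement13_general δ
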